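/- arXiv:2302.10151 — 2 statements merged into one kernel-verified Lean document; each statement's English description precedes it below -/
import Mathlib

section
/- Distinct clusters have disjoint v-intervals: if 𝒮 and 𝒯 are distinct equivalence classes of ~, then I_v(𝒮) ∩ I_v(𝒯) = ∅. -/
/-! Fix `z` with `f z = true`. For points with `f = false`, `x ~ y` says exactly that `v x` and
`v y` lie on the same side of `v z`, for every such `z`. A point `t` interior to `I_v(𝒮)` lies
between two members of `𝒮`, hence on the same side of each `v z` as every member of `𝒮`. So if
`t` is interior to both `I_v(𝒮)` and `I_v(𝒯)`, the two clusters lie on the same side of every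
threshold and coincide. A cluster with `f = true` has constant `v`, so its interval is empty. -/

def duelRel {S : Type*} (v : S → ℝ) (f : S → Bool) (x y : S) : Prop :=
  (f x = true ∧ f y = true ∧ v x = v y) ∨
  (f x = false ∧ f y = false ∧
    ∀ z : S, f z = true → ¬ (min (v x) (v y) ≤ v z ∧ v z < max (v x) (v y)))

open Set

theorem not_min_le_and_lt_max_iff {α : Type*} [LinearOrder α] {a b c : α} :
    ¬ (min a b ≤ c ∧ c < max a b) ↔ (c < a ↔ c < b) := by
  grind

theorem exists_lt_and_exists_gt_of_mem_Ioo_csInf_csSup {α : Type*}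
    [ConditionallyCompleteLinearOrder α] {s : Set α} (hs : s.Nonempty) {t : α}
    (ht : t ∈ Ioo (sInf s) (sSup s)) : (∃ x ∈ s, x < t) ∧ ∃ y ∈ s, t < y :=
  ⟨exists_lt_of_csInf_lt hs ht.1, exists_lt_of_lt_csSup hs ht.2⟩

namespace duelRel

variable {S : Type*} {v : S → ℝ} {f : S → Bool} {a b x y z : S} {t : ℝ}

def cluster (v : S → ℝ) (f : S → Bool) (a : S) : Set S := {y | duelRel v f a y}

theorem eq_of_true (hx : f x = true) (h : duelRel v f x y) : v y = v x := by
  rcases h with ⟨-, -, h⟩ | ⟨hx', -⟩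
  · exact h.symm
  · simp [hx] at hx'

theorem iff_of_false (hx : f x = false) :
    duelRel v f x y ↔ f y = false ∧ ∀ z, f z = true → (v z < v x ↔ v z < v y) := by
  simp only [duelRel, hx, Bool.false_eq_true, false_and, true_and, false_or,
    not_min_le_and_lt_max_iff]

theorem refl (v : S → ℝ) (f : S → Bool) (x : S) : duelRel v f x x := by
  cases hx : f x
  · exact (iff_of_false hx).2 ⟨hx, fun _ _ => Iff.rfl⟩
  · exact Or.inl ⟨hx, hx, rfl⟩

theorem lt_iff_lt_of_false (hx : f x = false) (h : duelRel v f x y) (hz : f z = true) :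
    v z < v x ↔ v z < v y :=
  ((iff_of_false hx).1 h).2 z hz

theorem exists_lt_and_exists_gt_of_mem_Ioo
    (ht : t ∈ Ioo (sInf (v '' cluster v f a)) (sSup (v '' cluster v f a))) :
    (∃ x, duelRel v f a x ∧ v x < t) ∧ ∃ y, duelRel v f a y ∧ t < v y := by
  obtain ⟨⟨_, ⟨x, hx, rfl⟩, hxt⟩, ⟨_, ⟨y, hy, rfl⟩, hty⟩⟩ :=
    exists_lt_and_exists_gt_of_mem_Ioo_csInf_csSup (Nonempty.image v ⟨a, refl v f a⟩) ht
  exact ⟨⟨x, hx, hxt⟩, ⟨y, hy, hty⟩⟩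

theorem false_of_mem_Ioo
    (ht : t ∈ Ioo (sInf (v '' cluster v f a)) (sSup (v '' cluster v f a))) :
    f a = false := by
  obtain ⟨⟨x, hx, hxt⟩, ⟨y, hy, hty⟩⟩ := exists_lt_and_exists_gt_of_mem_Ioo ht
  by_contra ha
  rw [Bool.not_eq_false] at ha
  rw [eq_of_true ha hx] at hxt
  rw [eq_of_true ha hy] at hty
  exact (hxt.trans hty).false

theorem lt_iff_lt_of_mem_Ioo (hz : f z = true)
    (ht : t ∈ Ioo (sInf (v '' cluster v f a)) (sSup (v '' cluster v f a))) :
    v z < t ↔ v z < v a := by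
  have ha := false_of_mem_Ioo ht
  obtain ⟨⟨x, hx, hxt⟩, ⟨y, hy, hty⟩⟩ := exists_lt_and_exists_gt_of_mem_Ioo ht
  refine ⟨fun hzt => (lt_iff_lt_of_false ha hy hz).2 (hzt.trans hty), fun hza => ?_⟩
  exact lt_of_not_ge fun htz => ((lt_iff_lt_of_false ha hx hz).1 hza).not_ge (hxt.le.trans htz)

theorem cluster_eq_of_lt_iff_lt (ha : f a = false) (hb : f b = false)
    (hab : ∀ z, f z = true → (v z < v a ↔ v z < v b)) :
    cluster v f a = cluster v f b := by
  ext y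
  simp only [cluster, mem_ofPred_eq, iff_of_false ha, iff_of_false hb]
  exact and_congr_right fun _ => forall₂_congr fun z hz => by rw [hab z hz]

end duelRel

theorem clusters_v_intervals_disjoint_general {S : Type*}
    (v : S → ℝ) (f : S → Bool) (𝒮 𝒯 : Set S)
    (h𝒮 : ∃ a : S, 𝒮 = {y | duelRel v f a y})
    (h𝒯 : ∃ b : S, 𝒯 = {y | duelRel v f b y})
    (hne : 𝒮 ≠ 𝒯) :
    Set.Ioo (sInf (v '' 𝒮)) (sSup (v '' 𝒮)) ∩
      Set.Ioo (sInf (v '' 𝒯)) (sSup (v '' 𝒯)) = ∅ := by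
  obtain ⟨a, rfl⟩ := h𝒮
  obtain ⟨b, rfl⟩ := h𝒯
  refine eq_empty_of_forall_notMem fun t ⟨hta, htb⟩ => hne ?_
  exact duelRel.cluster_eq_of_lt_iff_lt (duelRel.false_of_mem_Ioo hta)
    (duelRel.false_of_mem_Ioo htb) fun z hz =>
      (duelRel.lt_iff_lt_of_mem_Ioo hz hta).symm.trans (duelRel.lt_iff_lt_of_mem_Ioo hz htb)

/-- Distinct clusters have disjoint `v`-intervals. -/
theorem clusters_v_intervals_disjoint {S : Type*} [Fintype S]
    (v : S → ℝ) (f : S → Bool) (𝒮 𝒯 : Set S)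
    (h𝒮 : ∃ a : S, 𝒮 = {y | duelRel v f a y})
    (h𝒯 : ∃ b : S, 𝒯 = {y | duelRel v f b y})
    (hne : 𝒮 ≠ 𝒯) :
    Set.Ioo (sInf (v '' 𝒮)) (sSup (v '' 𝒮)) ∩
      Set.Ioo (sInf (v '' 𝒯)) (sSup (v '' 𝒯)) = ∅ :=
  clusters_v_intervals_disjoint_general v f 𝒮 𝒯 h𝒮 h𝒯 hne
end

section
/- Suppose that at some stage the state vector satisfies ψ_{k₁l₁} = ψ_{k₂l₂} for all k₁~k₂ and l₁~l₂. Then after applying the dueling update (𝒢₁ψ)_{kl} = (2/N)·Σ_{k'} o(k',l)ψ_{k'l} − o(k,l)ψ_{kl}, the new amplitudes also satisfy (𝒢₁ψ)_{k₁l₁} = (𝒢₁ψ)_{k₂l₂} for all k₁~k₂ and l₁~l₂. -/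
/-- The oracle sign `o(x,y)` as a complex number. -/
noncomputable def duelO {S : Type*} (v : S → ℝ) (f : S → Bool) (x y : S) : ℂ :=
  if f x = true ∧ v x < v y then -1 else 1

/-- The dueling update on the first register. -/
noncomputable def G1 {S : Type*} [Fintype S] (v : S → ℝ) (f : S → Bool)
    (ψ : S × S → ℂ) : S × S → ℂ := fun kl =>
  (2 / (Fintype.card S : ℂ)) * ∑ k' : S, duelO v f k' kl.2 * ψ (k', kl.2) -
    duelO v f kl.1 kl.2 * ψ kl

lemma lt_iff_lt_of_notMem_Ico_min_max {α : Type*} [LinearOrder α] {a b c : α}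
    (h : c ∉ Set.Ico (min a b) (max a b)) : c < a ↔ c < b := by
  rw [Set.mem_Ico] at h
  rcases le_total a b with hab | hab
  · rw [min_eq_left hab, max_eq_right hab] at h
    exact ⟨fun hca => hca.trans_le hab, fun hcb => not_le.mp fun hac => h ⟨hac, hcb⟩⟩
  · rw [min_eq_right hab, max_eq_left hab] at h
    exact ⟨fun hca => not_le.mp fun hbc => h ⟨hbc, hca⟩, fun hcb => hcb.trans_le hab⟩

lemma duelRel_refl {S : Type*} (v : S → ℝ) (f : S → Bool) (x : S) : duelRel v f x x := by
  cases hx : f x with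
  | true => exact Or.inl ⟨hx, hx, rfl⟩
  | false => exact Or.inr ⟨hx, hx, fun z _ hz => by
      rw [min_self, max_self] at hz
      exact (hz.1.trans_lt hz.2).false⟩

section

variable {S : Type*} {v : S → ℝ} {f : S → Bool}

lemma duelRel.lt_iff_lt {z l₁ l₂ : S} (h : duelRel v f l₁ l₂) (hz : f z = true) :
    v z < v l₁ ↔ v z < v l₂ := by
  rcases h with ⟨-, -, hv⟩ | ⟨-, -, hgap⟩
  · rw [hv]
  · exact lt_iff_lt_of_notMem_Ico_min_max (hgap z hz)

lemma duelO_congr_left {k₁ k₂ : S} (h : duelRel v f k₁ k₂) (l : S) :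
    duelO v f k₁ l = duelO v f k₂ l := by
  rcases h with ⟨h₁, h₂, hv⟩ | ⟨h₁, h₂, -⟩
  · simp only [duelO, h₁, h₂, hv]
  · simp only [duelO, h₁, h₂, Bool.false_eq_true, false_and, if_false]

lemma duelO_congr_right {l₁ l₂ : S} (h : duelRel v f l₁ l₂) (k : S) :
    duelO v f k l₁ = duelO v f k l₂ :=
  if_congr (and_congr_right h.lt_iff_lt) rfl rfl

end

/-- The update `𝒢₁` preserves cluster-uniformity of the state vector. -/
theorem G1_preserves_cluster_uniformity {S : Type*} [Fintype S]
    (v : S → ℝ) (f : S → Bool) (ψ : S × S → ℂ)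
    (hψ : ∀ k₁ k₂ l₁ l₂ : S, duelRel v f k₁ k₂ → duelRel v f l₁ l₂ →
      ψ (k₁, l₁) = ψ (k₂, l₂)) :
    ∀ k₁ k₂ l₁ l₂ : S, duelRel v f k₁ k₂ → duelRel v f l₁ l₂ →
      G1 v f ψ (k₁, l₁) = G1 v f ψ (k₂, l₂) := by
  intro k₁ k₂ l₁ l₂ hk hl
  have column (k : S) : duelO v f k l₁ * ψ (k, l₁) = duelO v f k l₂ * ψ (k, l₂) := by
    rw [duelO_congr_right hl, hψ k k l₁ l₂ (duelRel_refl v f k) hl]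
  simp only [G1]
  rw [Finset.sum_congr rfl fun k _ => column k, duelO_congr_left hk, duelO_congr_right hl,
    hψ k₁ k₂ l₁ l₂ hk hl]
end
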